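/- arXiv:2101.07545 — 2 statements merged into one kernel-verified Lean document; each statement's English description precedes it below -/
import Mathlib

section
/- Let H be a real Hilbert space, λ ∈ ℝ, and let f : H → (-∞,∞] be proper, λ-convex and lower semicontinuous. Let τ > 0 be admissible, i.e. τ < −1/λ if λ < 0. Then the resolvent J_τ : H → H is Lipschitz with constant (1 + λτ)^{-1}, i.e. ‖J_τ(x) − J_τ(y)‖ ≤ (1 + λτ)^{-1} ‖x − y‖ for all x, y ∈ H. -/
open Filter Topology MeasureTheory Set
open scoped ENNReal RealInnerProductSpace

noncomputable section

attribute [local instance] Classical.propDecidable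

variable {H : Type*} [NormedAddCommGroup H] [InnerProductSpace ℝ H] [CompleteSpace H]

/-- `f : H → (-∞,∞]` is proper: not identically `⊤` (and it never takes the value `⊥`). -/
def ProperFn (f : H → EReal) : Prop :=
  (∃ x, f x ≠ ⊤) ∧ ∀ x, f x ≠ ⊥

/-- `f` is `λ`-convex: `x ↦ f x - (λ/2)‖x‖²` is convex, expressed via the perturbed
convexity inequality. -/
def LambdaConvex (lam : ℝ) (f : H → EReal) : Prop :=
  ∀ x y : H, ∀ t : ℝ, 0 ≤ t → t ≤ 1 →
    f ((1 - t) • x + t • y)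
      ≤ ((1 - t : ℝ) : EReal) * f x + ((t : ℝ) : EReal) * f y
        - ((lam / 2 * (t * (1 - t)) * ‖x - y‖ ^ 2 : ℝ) : EReal)

/-- The subdifferential of a `λ`-convex function at `x` (contained in the domain of `f`). -/
def subdiff (lam : ℝ) (f : H → EReal) (x : H) : Set H :=
  {p : H | f x ≠ ⊤ ∧
    ∀ y : H, f x + ((⟪p, y - x⟫ + lam / 2 * ‖y - x‖ ^ 2 : ℝ) : EReal) ≤ f y}

/-- `∇f(x)`: the element of minimal norm of `∂f(x)` (junk value `0` if there is none). -/
def gradMin (lam : ℝ) (f : H → EReal) (x : H) : H :=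
  if h : ∃ p ∈ subdiff lam f x, ∀ q ∈ subdiff lam f x, ‖p‖ ≤ ‖q‖ then h.choose else 0

/-- `|∇f|(x) ∈ [0,∞]`, equal to `+∞` when `∂f(x) = ∅` (in particular when `f x = ⊤`). -/
def gradNorm (lam : ℝ) (f : H → EReal) (x : H) : ℝ≥0∞ :=
  if (subdiff lam f x).Nonempty then ENNReal.ofReal ‖gradMin lam f x‖ else ⊤

/-- The resolvent `J_τ(x)`: the minimizer of `y ↦ f y + ‖y-x‖²/(2τ)` (junk `0` if none). -/
def Jres (f : H → EReal) (τ : ℝ) (x : H) : H :=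
  if h : ∃ y : H, ∀ z : H,
      f y + ((‖y - x‖ ^ 2 / (2 * τ) : ℝ) : EReal)
        ≤ f z + ((‖z - x‖ ^ 2 / (2 * τ) : ℝ) : EReal)
  then h.choose else 0

/-- The Moreau–Yosida regularization `f_τ(x) = min_y (f y + ‖y-x‖²/(2τ))`. -/
def moreau (f : H → EReal) (τ : ℝ) (x : H) : ℝ :=
  (f (Jres f τ x)).toReal + ‖Jres f τ x - x‖ ^ 2 / (2 * τ)

/-- `γ` is absolutely continuous on `[a,b]` with an integrable derivative. -/
abbrev IsACCurve (a b : ℝ) (γ : ℝ → H) : Prop :=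
  ∃ g : ℝ → H, IntegrableOn g (Icc a b) ∧ ∀ t ∈ Icc a b, γ t = γ a + ∫ s in a..t, g s

/-- The action `I_f^{[a,b]}(γ) = ∫_a^b (‖γ̇‖² + |∇f|²(γ)) dt ∈ [0,∞]`, set to `+∞` when `γ`
is not absolutely continuous. -/
def actionFn (lam : ℝ) (f : H → EReal) (a b : ℝ) (γ : ℝ → H) : ℝ≥0∞ :=
  if h : IsACCurve a b γ then
    ∫⁻ t in Ioc a b, (ENNReal.ofReal (‖h.choose t‖ ^ 2) + gradNorm lam f (γ t) ^ 2)
  else ⊤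

/-- `Θ_{f,x₀,x₁}`: the action on `[0,1]` with endpoint constraints. -/
def Theta (lam : ℝ) (f : H → EReal) (x0 x1 : H) (γ : ℝ → H) : ℝ≥0∞ :=
  if γ 0 = x0 ∧ γ 1 = x1 then actionFn lam f 0 1 γ else ⊤

/-- `Γ_δ(x₀,x_δ)`: infimum of the action over curves joining the endpoints. -/
def GammaInf (lam : ℝ) (f : H → EReal) (δ : ℝ) (x0 xδ : H) : ℝ≥0∞ :=
  ⨅ (γ : ℝ → H) (_ : γ 0 = x0 ∧ γ δ = xδ), actionFn lam f 0 δ γ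

/-- Mosco convergence of `fh` to `f`: recovery sequences for the strong topology, and the
`liminf` inequality along weakly convergent sequences. -/
def Mosco (fh : ℕ → H → EReal) (f : H → EReal) : Prop :=
  (∀ x : H, ∃ xh : ℕ → H, Tendsto xh atTop (𝓝 x) ∧
      Filter.limsup (fun h => fh h (xh h)) atTop ≤ f x) ∧
  (∀ (xh : ℕ → H) (x : H),
      (∀ p : H, Tendsto (fun h => ⟪xh h, p⟫) atTop (𝓝 ⟪x, p⟫)) →
      f x ≤ Filter.liminf (fun h => fh h (xh h)) atTop)

/-! With `μ = λ + 1/τ`, admissibility says `μ > 0`, and `F_x y = f y + ‖y - x‖² / (2τ)` is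
`μ`-convex. A proper, lower semicontinuous, `μ`-convex `F` is bounded below (lower
semicontinuity bounds it near one point, and convexity propagates the bound with quadratic
growth), its minimizing sequences are Cauchy by the midpoint inequality, so it attains its
minimum, and at a minimizer `u` it grows quadratically: `F u + μ/2 ‖u - z‖² ≤ F z`.
Applying this to `F_x` at `J_τ x` and to `F_y` at `J_τ y`, and adding, gives
`(1 + λτ) ‖J_τ x - J_τ y‖² ≤ ⟪J_τ x - J_τ y, x - y⟫`; Cauchy–Schwarz concludes. -/

theorem EReal.coe_mul_top_add_sub {s t c : ℝ} {b : EReal} (hs : 0 < s) (ht : 0 ≤ t)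
    (hb : b ≠ ⊥) : (s : EReal) * ⊤ + t * b - c = ⊤ := by
  have htb : (t : EReal) * b ≠ ⊥ := by
    rw [EReal.mul_ne_bot]
    exact ⟨Or.inl (EReal.coe_ne_bot t), Or.inr hb, Or.inl (EReal.coe_ne_top t),
      Or.inl (by exact_mod_cast ht)⟩
  rw [EReal.coe_mul_top_of_pos hs, EReal.top_add_of_ne_bot htb, EReal.top_sub_coe]

theorem one_add_mul_pos_of_admissible {lam τ : ℝ} (hτ : 0 < τ) (hadm : lam < 0 → τ < -1 / lam) :
    0 < 1 + lam * τ := by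
  rcases lt_or_ge lam 0 with hlam | hlam
  · have h := mul_lt_mul_of_neg_left (hadm hlam) hlam
    rw [mul_div_cancel₀ _ hlam.ne] at h
    linarith
  · positivity

section

variable {E : Type*} [NormedAddCommGroup E]

def proxObjective (f : E → EReal) (τ : ℝ) (x y : E) : EReal :=
  f y + ((‖y - x‖ ^ 2 / (2 * τ) : ℝ) : EReal)

theorem proxObjective_eq_coe {f : E → EReal} {τ : ℝ} {x y : E} {a : ℝ} (h : f y = a) :
    proxObjective f τ x y = ((a + ‖y - x‖ ^ 2 / (2 * τ) : ℝ) : EReal) := by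
  rw [proxObjective, h, EReal.coe_add]

theorem ProperFn.proxObjective {f : E → EReal} (hf : ProperFn f) (τ : ℝ) (x : E) :
    ProperFn (proxObjective f τ x) := by
  obtain ⟨⟨x₀, hx₀⟩, hbot⟩ := hf
  refine ⟨⟨x₀, ?_⟩, fun y => ?_⟩
  · rw [proxObjective_eq_coe (EReal.coe_toReal hx₀ (hbot x₀)).symm]
    exact EReal.coe_ne_top _
  · exact EReal.add_ne_bot_iff.2 ⟨hbot y, EReal.coe_ne_bot _⟩

theorem LowerSemicontinuous.proxObjective {f : E → EReal} (hf : LowerSemicontinuous f)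
    (τ : ℝ) (x : E) : LowerSemicontinuous (proxObjective f τ x) := by
  refine hf.add' (continuous_coe_real_ereal.comp (by fun_prop)).lowerSemicontinuous fun y => ?_
  exact EReal.continuousAt_add (Or.inr (EReal.coe_ne_bot _)) (Or.inr (EReal.coe_ne_top _))

theorem proxObjective_Jres_le {f : E → EReal} {τ : ℝ} {x : E}
    (h : ∃ u, ∀ z, proxObjective f τ x u ≤ proxObjective f τ x z) (z : E) :
    proxObjective f τ x (Jres f τ x) ≤ proxObjective f τ x z := by
  unfold Jres
  split_ifs with hJ
  · exact hJ.choose_spec z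
  · exact absurd h hJ

variable [InnerProductSpace ℝ E]

theorem LambdaConvex.le_coe_of_eq {lam : ℝ} {f : E → EReal} (hf : LambdaConvex lam f)
    {x y : E} {a b t : ℝ} (hx : f x = a) (hy : f y = b) (ht₀ : 0 ≤ t) (ht₁ : t ≤ 1) :
    f ((1 - t) • x + t • y)
      ≤ (((1 - t) * a + t * b - lam / 2 * (t * (1 - t)) * ‖x - y‖ ^ 2 : ℝ) : EReal) := by
  have h := hf x y t ht₀ ht₁
  rw [hx, hy] at h
  exact h.trans_eq (by norm_cast)

theorem norm_lineMap_sub_sq (x y c : E) (t : ℝ) :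
    ‖(1 - t) • x + t • y - c‖ ^ 2
      = (1 - t) * ‖x - c‖ ^ 2 + t * ‖y - c‖ ^ 2 - t * (1 - t) * ‖x - y‖ ^ 2 := by
  rw [show (1 - t) • x + t • y - c = (1 - t) • (x - c) + t • (y - c) by module,
    show x - y = (x - c) - (y - c) by abel, norm_add_sq_real, norm_sub_sq_real (x - c),
    real_inner_smul_left, real_inner_smul_right, norm_smul, norm_smul, mul_pow, mul_pow,
    Real.norm_eq_abs, Real.norm_eq_abs, sq_abs, sq_abs]
  ring

theorem LambdaConvex.proxObjective {lam : ℝ} {f : E → EReal} (hf : LambdaConvex lam f)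
    (hbot : ∀ x, f x ≠ ⊥) (τ : ℝ) (c : E) :
    LambdaConvex (lam + 1 / τ) (proxObjective f τ c) := by
  intro x y t ht₀ ht₁
  simp only [_root_.proxObjective]
  rcases ht₀.eq_or_lt with rfl | ht₀
  · simp
  rcases ht₁.eq_or_lt with rfl | ht₁
  · simp
  have hne (z : E) : f z + ((‖z - c‖ ^ 2 / (2 * τ) : ℝ) : EReal) ≠ ⊥ :=
    EReal.add_ne_bot_iff.2 ⟨hbot z, EReal.coe_ne_bot _⟩
  by_cases hx : f x = ⊤
  · rw [hx, EReal.top_add_coe, EReal.coe_mul_top_add_sub (by linarith) ht₀.le (hne y)]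
    exact le_top
  by_cases hy : f y = ⊤
  · rw [hy, EReal.top_add_coe, add_comm _ ((t : EReal) * ⊤),
      EReal.coe_mul_top_add_sub ht₀ (by linarith) (hne x)]
    exact le_top
  have hx' := (EReal.coe_toReal hx (hbot x)).symm
  have hy' := (EReal.coe_toReal hy (hbot y)).symm
  rw [hx', hy']
  calc _ ≤ (((1 - t) * (f x).toReal + t * (f y).toReal
          - lam / 2 * (t * (1 - t)) * ‖x - y‖ ^ 2 : ℝ) : EReal)
          + ((‖(1 - t) • x + t • y - c‖ ^ 2 / (2 * τ) : ℝ) : EReal) := by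
        gcongr
        exact hf.le_coe_of_eq hx' hy' ht₀.le ht₁.le
    _ = _ := by
        norm_cast
        rw [norm_lineMap_sub_sq]
        ring

theorem LambdaConvex.exists_coe_le {μ : ℝ} {F : E → EReal} (hμ : 0 < μ) (hF : ProperFn F)
    (hconv : LambdaConvex μ F) (hlsc : LowerSemicontinuous F) :
    ∃ M : ℝ, ∀ z, (M : EReal) ≤ F z := by
  obtain ⟨⟨x₀, hx₀⟩, hbot⟩ := hF
  set a := (F x₀).toReal
  have ha : F x₀ = a := (EReal.coe_toReal hx₀ (hbot x₀)).symm
  have hlt : ((a - 1 : ℝ) : EReal) < F x₀ := by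
    rw [ha]
    exact_mod_cast sub_one_lt a
  obtain ⟨ε, hε, hball⟩ := Metric.eventually_nhds_iff.1 (hlsc x₀ _ hlt)
  refine ⟨min (a - 1) (a - 4 / (μ * ε ^ 2)), fun z => ?_⟩
  by_cases hz : F z = ⊤
  · simp [hz]
  have hb : F z = (F z).toReal := (EReal.coe_toReal hz (hbot z)).symm
  set b := (F z).toReal
  rw [hb, EReal.coe_le_coe_iff]
  by_cases hzx₀ : dist z x₀ < ε
  · have h : ((a - 1 : ℝ) : EReal) < F z := hball hzx₀
    rw [hb, EReal.coe_lt_coe_iff] at h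
    exact (min_le_left _ _).trans h.le
  refine (min_le_right _ _).trans ?_
  rw [not_lt, dist_eq_norm] at hzx₀
  set d := ‖z - x₀‖
  have hd : 0 < d := hε.trans_le hzx₀
  set t := ε / (2 * d)
  have ht₀ : 0 < t := by positivity
  have ht₁ : t ≤ 1 / 2 := by
    rw [div_le_div_iff₀ (by positivity) two_pos]
    linarith
  have hw : dist ((1 - t) • x₀ + t • z) x₀ < ε := by
    rw [dist_eq_norm, show (1 - t) • x₀ + t • z - x₀ = t • (z - x₀) by module, norm_smul,
      Real.norm_of_nonneg ht₀.le, div_mul_eq_mul_div, mul_div_mul_right _ _ hd.ne']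
    linarith
  have hFw : ((a - 1 : ℝ) : EReal) < F ((1 - t) • x₀ + t • z) := hball hw
  have hkey := hFw.trans_le (hconv.le_coe_of_eq ha hb ht₀.le (by linarith))
  rw [EReal.coe_lt_coe_iff, norm_sub_rev] at hkey
  -- Dividing `hkey` by `t = ε / (2d)` gives `b - a > μ d² / 4 - 2d / ε ≥ -4 / (μ ε²)`.
  have htd : t * (2 * d / ε) = 1 := by
    simp only [t]
    field_simp
  have hdiv : μ / 2 * (1 - t) * d ^ 2 - 2 * d / ε < b - a := by
    refine lt_of_mul_lt_mul_left ?_ ht₀.le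
    calc t * (μ / 2 * (1 - t) * d ^ 2 - 2 * d / ε)
        = μ / 2 * (t * (1 - t)) * d ^ 2 - 1 := by rw [mul_sub, htd]; ring
      _ < t * (b - a) := by linarith
  have hhalf : μ / 4 * d ^ 2 ≤ μ / 2 * (1 - t) * d ^ 2 := by
    nlinarith [mul_nonneg (mul_nonneg hμ.le (sq_nonneg d)) (sub_nonneg.2 ht₁)]
  have hsq : μ / 4 * d ^ 2 - 2 * d / ε + 4 / (μ * ε ^ 2) = μ / 4 * (d - 4 / (μ * ε)) ^ 2 := by
    field_simp
    ring
  nlinarith [mul_nonneg hμ.le (sq_nonneg (d - 4 / (μ * ε)))]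

theorem LambdaConvex.sq_norm_sub_le {μ m : ℝ} {F : E → EReal} (hconv : LambdaConvex μ F)
    (hm : ∀ z, (m : EReal) ≤ F z) {x y : E} {a b : ℝ} (hx : F x = a) (hy : F y = b) :
    μ / 8 * ‖x - y‖ ^ 2 ≤ (a + b) / 2 - m := by
  have h := (hm _).trans (hconv.le_coe_of_eq hx hy (t := 1 / 2) (by norm_num) (by norm_num))
  rw [EReal.coe_le_coe_iff] at h
  linarith

theorem LambdaConvex.exists_forall_le [CompleteSpace E] {μ : ℝ} {F : E → EReal} (hμ : 0 < μ)
    (hF : ProperFn F) (hconv : LambdaConvex μ F) (hlsc : LowerSemicontinuous F) :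
    ∃ u, ∀ z, F u ≤ F z := by
  obtain ⟨M, hM⟩ := hconv.exists_coe_le hμ hF hlsc
  obtain ⟨⟨x₀, hx₀⟩, hbot⟩ := hF
  set m := ⨅ z, F z
  have hm : ∀ z, m ≤ F z := iInf_le F
  have hr : ((m.toReal : ℝ) : EReal) = m := EReal.coe_toReal ((hm x₀).trans_lt hx₀.lt_top).ne
    ((EReal.bot_lt_coe M).trans_le (le_iInf hM)).ne'
  set r := m.toReal
  have hseq (n : ℕ) : ∃ z, F z < ((r + 1 / (n + 1) : ℝ) : EReal) := by
    have h : m < ((r + 1 / (n + 1) : ℝ) : EReal) := by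
      rw [← hr, EReal.coe_lt_coe_iff]
      exact lt_add_of_pos_right r (by positivity)
    exact iInf_lt_iff.1 h
  choose z hz using hseq
  have hzr (n : ℕ) : F (z n) = (F (z n)).toReal :=
    (EReal.coe_toReal (hz n).ne_top (hbot _)).symm
  have hdist (n k : ℕ) (hnk : n ≤ k) : dist (z n) (z k) ≤ √(8 / μ * (1 / (n + 1))) := by
    have hn := hz n
    have hk := hz k
    rw [hzr, EReal.coe_lt_coe_iff] at hn hk
    have hkn : 1 / ((k : ℝ) + 1) ≤ 1 / (n + 1) := by gcongr
    have h := hconv.sq_norm_sub_le (hr ▸ hm) (hzr n) (hzr k)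
    rw [dist_eq_norm]
    refine Real.le_sqrt_of_sq_le ?_
    calc ‖z n - z k‖ ^ 2 = 8 / μ * (μ / 8 * ‖z n - z k‖ ^ 2) := by field_simp
      _ ≤ 8 / μ * (1 / (n + 1)) := by gcongr; linarith
  have hlim : Tendsto (fun n : ℕ => √(8 / μ * (1 / (n + 1)))) atTop (𝓝 0) := by
    simpa using (tendsto_one_div_add_atTop_nhds_zero_nat.const_mul (8 / μ)).sqrt
  obtain ⟨u, hu⟩ := cauchySeq_tendsto_of_complete (cauchySeq_of_le_tendsto_0' _ hdist hlim)
  have hFz : Tendsto (F ∘ z) atTop (𝓝 m) := by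
    refine tendsto_of_tendsto_of_tendsto_of_le_of_le tendsto_const_nhds ?_ (fun n => hm _)
      (fun n => (hz n).le)
    rw [← hr]
    refine EReal.tendsto_coe.2 ?_
    simpa using tendsto_one_div_add_atTop_nhds_zero_nat.const_add r
  refine ⟨u, fun y => le_trans ?_ (hm y)⟩
  calc F u ≤ liminf F (𝓝 u) := LowerSemicontinuousAt.le_liminf (hlsc u)
    _ ≤ liminf (F ∘ z) atTop := liminf_le_liminf_of_le hu
    _ = m := hFz.liminf_eq

theorem LambdaConvex.add_sq_norm_le_of_forall_le {μ : ℝ} {F : E → EReal}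
    (hconv : LambdaConvex μ F) {u z : E} {a b : ℝ} (hu : ∀ y, F u ≤ F y) (ha : F u = a)
    (hb : F z = b) : a + μ / 2 * ‖u - z‖ ^ 2 ≤ b := by
  have key : ∀ t ∈ Ioo (0 : ℝ) 1, a + μ / 2 * (1 - t) * ‖u - z‖ ^ 2 ≤ b := by
    rintro t ⟨ht₀, ht₁⟩
    have h := (hu _).trans (hconv.le_coe_of_eq ha hb ht₀.le ht₁.le)
    rw [ha, EReal.coe_le_coe_iff] at h
    refine le_of_mul_le_mul_left ?_ ht₀
    linarith
  have hlim : Tendsto (fun t => a + μ / 2 * (1 - t) * ‖u - z‖ ^ 2) (𝓝[>] 0)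
      (𝓝 (a + μ / 2 * (1 - 0) * ‖u - z‖ ^ 2)) :=
    ((Continuous.tendsto (by fun_prop) 0).mono_left nhdsWithin_le_nhds)
  simpa using le_of_tendsto hlim (eventually_of_mem (Ioo_mem_nhdsGT one_pos) key)

theorem norm_le_inv_mul_of_mul_sq_le_inner {c : ℝ} {a b : E} (hc : 0 < c)
    (h : c * ‖a‖ ^ 2 ≤ ⟪a, b⟫) : ‖a‖ ≤ c⁻¹ * ‖b‖ := by
  rw [inv_mul_eq_div, le_div_iff₀ hc]
  rcases (norm_nonneg a).eq_or_lt with ha | ha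
  · rw [← ha, zero_mul]
    exact norm_nonneg b
  refine le_of_mul_le_mul_right ?_ ha
  calc ‖a‖ * c * ‖a‖ = c * ‖a‖ ^ 2 := by ring
    _ ≤ ‖a‖ * ‖b‖ := h.trans (real_inner_le_norm a b)
    _ = ‖b‖ * ‖a‖ := mul_comm _ _

theorem mul_sq_norm_Jres_sub_le_inner [CompleteSpace E] {lam τ : ℝ} {f : E → EReal}
    (hf : ProperFn f) (hconv : LambdaConvex lam f) (hlsc : LowerSemicontinuous f) (hτ : 0 < τ)
    (hμ : 0 < lam + 1 / τ) (x y : E) :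
    (1 + lam * τ) * ‖Jres f τ x - Jres f τ y‖ ^ 2 ≤ ⟪Jres f τ x - Jres f τ y, x - y⟫ := by
  have hmin (c : E) (z : E) : proxObjective f τ c (Jres f τ c) ≤ proxObjective f τ c z :=
    proxObjective_Jres_le ((hconv.proxObjective hf.2 τ c).exists_forall_le hμ
      (hf.proxObjective τ c) (hlsc.proxObjective τ c)) z
  have hfin (c : E) : f (Jres f τ c) = (f (Jres f τ c)).toReal := by
    refine (EReal.coe_toReal (fun htop => ?_) (hf.2 _)).symm
    obtain ⟨x₀, hx₀⟩ := (hf.proxObjective τ c).1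
    have h := hmin c x₀
    rw [proxObjective, htop, EReal.top_add_coe, top_le_iff] at h
    exact hx₀ h
  have hx := (hconv.proxObjective hf.2 τ x).add_sq_norm_le_of_forall_le (hmin x)
    (proxObjective_eq_coe (hfin x)) (proxObjective_eq_coe (hfin y))
  have hy := (hconv.proxObjective hf.2 τ y).add_sq_norm_le_of_forall_le (hmin y)
    (proxObjective_eq_coe (hfin y)) (proxObjective_eq_coe (hfin x))
  set u := Jres f τ x
  set v := Jres f τ y
  have hquad : ‖v - x‖ ^ 2 - ‖u - x‖ ^ 2 + ‖u - y‖ ^ 2 - ‖v - y‖ ^ 2 = 2 * ⟪u - v, x - y⟫ := by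
    rw [norm_sub_sq_real, norm_sub_sq_real u x, norm_sub_sq_real u y, norm_sub_sq_real v y,
      inner_sub_left, inner_sub_right, inner_sub_right]
    ring
  rw [norm_sub_rev v u] at hy
  have hsum : (lam + 1 / τ) * ‖u - v‖ ^ 2 ≤ ⟪u - v, x - y⟫ / τ := by
    have h : (‖v - x‖ ^ 2 - ‖u - x‖ ^ 2 + ‖u - y‖ ^ 2 - ‖v - y‖ ^ 2) / (2 * τ)
        = ⟪u - v, x - y⟫ / τ := by
      rw [hquad]
      ring
    rw [← h, sub_div, add_div, sub_div]
    linarith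
  calc (1 + lam * τ) * ‖u - v‖ ^ 2 = τ * ((lam + 1 / τ) * ‖u - v‖ ^ 2) := by
        field_simp
        ring
    _ ≤ τ * (⟪u - v, x - y⟫ / τ) := by gcongr
    _ = ⟪u - v, x - y⟫ := by field_simp

end

/-- the resolvent is `(1+λτ)⁻¹`-Lipschitz. -/
theorem statement6 (lam : ℝ) (f : H → EReal)
    (hf : ProperFn f) (hconv : LambdaConvex lam f) (hlsc : LowerSemicontinuous f)
    (τ : ℝ) (hτ : 0 < τ) (hadm : lam < 0 → τ < -1 / lam) (x y : H) :
    ‖Jres f τ x - Jres f τ y‖ ≤ (1 + lam * τ)⁻¹ * ‖x - y‖ := by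
  have hpos := one_add_mul_pos_of_admissible hτ hadm
  have hμ : 0 < lam + 1 / τ := by
    rw [show lam + 1 / τ = (1 + lam * τ) / τ by field_simp; ring]
    positivity
  exact norm_le_inv_mul_of_mul_sq_le_inner hpos
    (mul_sq_norm_Jres_sub_le_inner hf hconv hlsc hτ hμ x y)

end
end

section
/- Let H be a real Hilbert space, λ ∈ ℝ, and let f : H → (-∞,∞] be proper, λ-convex and lower semicontinuous. Let τ > 0 be admissible, i.e. τ < −1/λ if λ < 0. Then for every x ∈ H: |∇f|(J_τ(x)) ≤ ‖x − J_τ(x)‖/τ ≤ (1 + λτ)^{-1} |∇f|(x), where the right-hand side is interpreted as +∞ if |∇f|(x) = ∞. -/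
open Filter Topology MeasureTheory Set
open scoped ENNReal RealInnerProductSpace

noncomputable section

attribute [local instance] Classical.propDecidable

variable {H : Type*} [NormedAddCommGroup H] [InnerProductSpace ℝ H] [CompleteSpace H]

/-! For `τ` admissible, `g = f + ‖· - x‖² / (2τ)` is `(λ + 1/τ)`-convex with `λ + 1/τ > 0`.
Such a function is bounded below (lower semicontinuity bounds it on a ball, and strong convexity
propagates the bound along segments, where the quadratic term wins), its minimizing sequences
are Cauchy, and lower semicontinuity makes the limit a minimizer `J = J_τ(x)`.
Minimality gives `0 ∈ ∂g(J)`, i.e. `(x - J)/τ ∈ ∂f(J)`, which is the first inequality. For the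
second, monotonicity of `∂f`, `λ‖x - J‖² ≤ ⟪q - (x - J)/τ, x - J⟫` for `q ∈ ∂f(x)`, yields
`(λ + 1/τ) ‖x - J‖² ≤ ‖q‖ ‖x - J‖`. -/

section

variable {E : Type*} [NormedAddCommGroup E] [InnerProductSpace ℝ E] {f g : E → EReal} {lam μ : ℝ}

lemma norm_one_sub_smul_add_smul_sq (u v : E) (t : ℝ) :
    ‖(1 - t) • u + t • v‖ ^ 2
      = (1 - t) * ‖u‖ ^ 2 + t * ‖v‖ ^ 2 - t * (1 - t) * ‖u - v‖ ^ 2 := by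
  simp only [← real_inner_self_eq_norm_sq, inner_add_left, inner_add_right, inner_sub_left,
    inner_sub_right, real_inner_smul_left, real_inner_smul_right, real_inner_comm v u]
  ring

lemma EReal.exists_coe_eq {a : EReal} (ha : a ≠ ⊤) (hb : a ≠ ⊥) : ∃ A : ℝ, a = A :=
  ⟨_, (EReal.coe_toReal ha hb).symm⟩

lemma EReal.add_sub_coe_add_coe (X Y : EReal) {a b q k₁ k₂ : ℝ} (h : q - k₁ = a + b - k₂) :
    X + Y - k₁ + q = (X + a) + (Y + b) - k₂ := by
  have hcoe : ((-k₁ : ℝ) : EReal) + q = a + b + ((-k₂ : ℝ) : EReal) := by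
    rw [← EReal.coe_add, ← EReal.coe_add, ← EReal.coe_add]
    congr 1
    linarith
  simp only [sub_eq_add_neg (G := EReal), ← EReal.coe_neg]
  rw [add_assoc (X + Y), hcoe]
  abel

namespace LambdaConvex

lemma exists_coe_eq_le (hconv : LambdaConvex lam f) (hbot : ∀ z, f z ≠ ⊥) {a b : E} {A B : ℝ}
    (ha : f a = A) (hb : f b = B) {t : ℝ} (ht₀ : 0 ≤ t) (ht₁ : t ≤ 1) :
    ∃ C : ℝ, f ((1 - t) • a + t • b) = C ∧
      C ≤ (1 - t) * A + t * B - lam / 2 * (t * (1 - t)) * ‖a - b‖ ^ 2 := by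
  have h := hconv a b t ht₀ ht₁
  rw [ha, hb] at h
  norm_cast at h
  obtain ⟨C, hC⟩ := EReal.exists_coe_eq (ne_top_of_le_ne_top (EReal.coe_ne_top _) h) (hbot _)
  exact ⟨C, hC, by exact_mod_cast hC ▸ h⟩

lemma add_sq_norm_sub_div (hconv : LambdaConvex lam f) {τ : ℝ} (x : E) :
    LambdaConvex (lam + 1 / τ) (fun z => f z + ((‖z - x‖ ^ 2 / (2 * τ) : ℝ) : EReal)) := by
  intro a b t ht₀ ht₁
  have hq : ‖(1 - t) • a + t • b - x‖ ^ 2 / (2 * τ) - lam / 2 * (t * (1 - t)) * ‖a - b‖ ^ 2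
      = (1 - t) * (‖a - x‖ ^ 2 / (2 * τ)) + t * (‖b - x‖ ^ 2 / (2 * τ))
        - (lam + 1 / τ) / 2 * (t * (1 - t)) * ‖a - b‖ ^ 2 := by
    have h := norm_one_sub_smul_add_smul_sq (a - x) (b - x) t
    rw [show (1 - t) • (a - x) + t • (b - x) = (1 - t) • a + t • b - x by module,
      sub_sub_sub_cancel_right] at h
    rw [h]
    ring
  calc f ((1 - t) • a + t • b) + ((‖(1 - t) • a + t • b - x‖ ^ 2 / (2 * τ) : ℝ) : EReal)
      ≤ (1 - t : ℝ) * f a + (t : ℝ) * f b - ((lam / 2 * (t * (1 - t)) * ‖a - b‖ ^ 2 : ℝ) : EReal)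
        + ((‖(1 - t) • a + t • b - x‖ ^ 2 / (2 * τ) : ℝ) : EReal) := by
        gcongr
        exact hconv a b t ht₀ ht₁
    _ = _ := by
        rw [EReal.left_distrib_of_nonneg_of_ne_top (by exact_mod_cast sub_nonneg.2 ht₁)
          (EReal.coe_ne_top _), EReal.left_distrib_of_nonneg_of_ne_top (by exact_mod_cast ht₀)
          (EReal.coe_ne_top _), ← EReal.coe_mul, ← EReal.coe_mul]
        exact EReal.add_sub_coe_add_coe _ _ hq

lemma mul_sq_dist_sub_dist_le (hconv : LambdaConvex μ g) (hbot : ∀ z, g z ≠ ⊥) (hμ : 0 ≤ μ)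
    {x₀ z : E} {c G r : ℝ} (hc : g x₀ = c) (hG : g z = G)
    (hball : ∀ {y : E} {C : ℝ}, dist y x₀ < r → g y = C → c - 1 < C) (hd : r ≤ dist z x₀)
    (hr : 0 < r) : μ * r / 8 * dist z x₀ ^ 2 - dist z x₀ ≤ r / 2 * (G - c) := by
  set d := dist z x₀
  have hd₀ : 0 < d := hr.trans_le hd
  -- the point of the segment `[x₀, z]` at distance `r / 2` from `x₀`
  set t := r / (2 * d)
  have ht₀ : 0 < t := by positivity
  have htd : t * d = r / 2 := by simp only [t]; field_simp
  have ht₁ : t ≤ 1 / 2 := by rw [div_le_iff₀ (by positivity)]; linarith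
  obtain ⟨C, hC, hCle⟩ := hconv.exists_coe_eq_le hbot hc hG ht₀.le (by linarith)
  have hnear : dist ((1 - t) • x₀ + t • z) x₀ < r := by
    rw [dist_eq_norm, show (1 - t) • x₀ + t • z - x₀ = t • (z - x₀) by module, norm_smul,
      Real.norm_of_nonneg ht₀.le, ← dist_eq_norm, htd]
    linarith
  have hseg : c - 1 < (1 - t) * c + t * G - μ / 2 * (t * (1 - t)) * d ^ 2 := by
    rw [← dist_eq_norm, dist_comm] at hCle
    exact (hball hnear hC).trans_le hCle
  have h1 := mul_lt_mul_of_pos_left hseg hd₀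
  have h2 : μ / 2 * (t * d) * (1 / 2) * d ^ 2 ≤ μ / 2 * (t * d) * (1 - t) * d ^ 2 := by
    gcongr; linarith
  rw [htd] at h2
  nlinarith

lemma exists_forall_coe_le (hconv : LambdaConvex μ g) (hg : ProperFn g) (hμ : 0 < μ)
    (hlsc : LowerSemicontinuous g) : ∃ L : ℝ, ∀ z, (L : EReal) ≤ g z := by
  obtain ⟨x₀, hx₀⟩ := hg.1
  obtain ⟨c, hc⟩ := EReal.exists_coe_eq hx₀ (hg.2 x₀)
  obtain ⟨r, hr, hball⟩ := Metric.eventually_nhds_iff.1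
    (hlsc x₀ ((c - 1 : ℝ) : EReal) (show _ < g x₀ by rw [hc]; exact_mod_cast sub_one_lt c))
  have hball' : ∀ {y : E} {C : ℝ}, dist y x₀ < r → g y = C → c - 1 < C := fun hy hC => by
    have h : ((c - 1 : ℝ) : EReal) < g _ := hball hy
    rw [hC] at h
    exact_mod_cast h
  refine ⟨c - 1 - 4 / (μ * r ^ 2), fun z => ?_⟩
  rcases eq_or_ne (g z) ⊤ with hz | hz
  · simp [hz]
  obtain ⟨G, hG⟩ := EReal.exists_coe_eq hz (hg.2 z)
  rw [hG, EReal.coe_le_coe_iff]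
  have h4 : 0 ≤ 4 / (μ * r ^ 2) := by positivity
  rcases lt_or_ge (dist z x₀) r with hd | hd
  · linarith [hball' hd hG]
  have hlin := hconv.mul_sq_dist_sub_dist_le hg.2 hμ.le hc hG hball' hd hr
  set d := dist z x₀
  have hquad : -(2 / (μ * r)) ≤ μ * r / 8 * d ^ 2 - d := by
    have h1 : μ * r / 8 * d ^ 2 - d + 2 / (μ * r) = (μ * r * d - 4) ^ 2 / (8 * (μ * r)) := by
      field_simp; ring
    have h2 : 0 ≤ (μ * r * d - 4) ^ 2 / (8 * (μ * r)) := by positivity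
    linarith
  have hGc : -(4 / (μ * r ^ 2)) ≤ G - c := by
    refine le_of_mul_le_mul_left ?_ (half_pos hr)
    have : r / 2 * -(4 / (μ * r ^ 2)) = -(2 / (μ * r)) := by field_simp; ring
    linarith
  linarith

lemma sq_norm_sub_le_s9 (hconv : LambdaConvex μ g) (hbot : ∀ z, g z ≠ ⊥) {m : ℝ}
    (hm : ∀ z, (m : EReal) ≤ g z) {a b : E} {A B : ℝ} (ha : g a = A) (hb : g b = B) :
    μ / 8 * ‖a - b‖ ^ 2 ≤ (A + B) / 2 - m := by
  obtain ⟨C, hC, hCle⟩ := hconv.exists_coe_eq_le hbot ha hb (t := 1 / 2) (by norm_num) (by norm_num)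
  have hmC : m ≤ C := by exact_mod_cast hC ▸ hm _
  linarith

end LambdaConvex

lemma mem_subdiff_iff (hbot : ∀ z, f z ≠ ⊥) {x p : E} {A : ℝ} (hx : f x = A) :
    p ∈ subdiff lam f x ↔ ∀ y (B : ℝ), f y = B → A + ⟪p, y - x⟫ + lam / 2 * ‖y - x‖ ^ 2 ≤ B := by
  refine ⟨fun hp y B hB => ?_, fun h => ⟨hx ▸ EReal.coe_ne_top A, fun y => ?_⟩⟩
  · have := hp.2 y
    rw [hx, hB, ← EReal.coe_add, EReal.coe_le_coe_iff] at this
    linarith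
  · rcases eq_or_ne (f y) ⊤ with hy | hy
    · simp [hy]
    obtain ⟨B, hB⟩ := EReal.exists_coe_eq hy (hbot y)
    rw [hx, hB, ← EReal.coe_add, EReal.coe_le_coe_iff]
    linarith [h y B hB]

lemma mul_sq_norm_sub_le_inner_of_mem_subdiff (hbot : ∀ z, f z ≠ ⊥) {a b p q : E}
    (hp : p ∈ subdiff lam f a) (hq : q ∈ subdiff lam f b) :
    lam * ‖a - b‖ ^ 2 ≤ ⟪p - q, a - b⟫ := by
  obtain ⟨A, hA⟩ := EReal.exists_coe_eq hp.1 (hbot a)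
  obtain ⟨B, hB⟩ := EReal.exists_coe_eq hq.1 (hbot b)
  have hpb := (mem_subdiff_iff hbot hA).1 hp b B hB
  have hqa := (mem_subdiff_iff hbot hB).1 hq a A hA
  rw [← neg_sub a b, inner_neg_right, norm_neg] at hpb
  rw [inner_sub_left]
  linarith

lemma subdiff_eq_iInter (hbot : ∀ z, f z ≠ ⊥) {x : E} {A : ℝ} (hx : f x = A) :
    subdiff lam f x =
      ⋂ (y) (B : ℝ) (_ : f y = B), {p | ⟪p, y - x⟫ ≤ B - A - lam / 2 * ‖y - x‖ ^ 2} := by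
  ext p
  simp only [mem_iInter, Set.mem_ofPred_eq, mem_subdiff_iff hbot hx]
  exact forall₃_congr fun y B hB => by constructor <;> intro h <;> linarith

lemma subdiff_eq_empty {x : E} (hx : f x = ⊤) : subdiff lam f x = ∅ :=
  eq_empty_of_forall_notMem fun _ hp => hp.1 hx

lemma isClosed_subdiff (hbot : ∀ z, f z ≠ ⊥) {x : E} : IsClosed (subdiff lam f x) := by
  rcases eq_or_ne (f x) ⊤ with hx | hx
  · simp [subdiff_eq_empty hx]
  obtain ⟨A, hA⟩ := EReal.exists_coe_eq hx (hbot x)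
  rw [subdiff_eq_iInter hbot hA]
  exact isClosed_iInter fun y => isClosed_iInter fun B => isClosed_iInter fun _ =>
    isClosed_le (by fun_prop) continuous_const

lemma convex_subdiff (hbot : ∀ z, f z ≠ ⊥) {x : E} : Convex ℝ (subdiff lam f x) := by
  rcases eq_or_ne (f x) ⊤ with hx | hx
  · rw [subdiff_eq_empty hx]; exact convex_empty
  obtain ⟨A, hA⟩ := EReal.exists_coe_eq hx (hbot x)
  have hlin (v : E) : IsLinearMap ℝ fun p : E => ⟪p, v⟫ :=
    ⟨fun _ _ => inner_add_left _ _ _, fun _ _ => real_inner_smul_left _ _ _⟩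
  rw [subdiff_eq_iInter hbot hA]
  exact convex_iInter fun y => convex_iInter fun B => convex_iInter fun _ =>
    convex_halfSpace_le (hlin _) _

lemma LambdaConvex.zero_mem_subdiff_of_forall_le (hconv : LambdaConvex μ g)
    (hbot : ∀ z, g z ≠ ⊥) {y : E} (hy : g y ≠ ⊤) (hmin : ∀ z, g y ≤ g z) :
    (0 : E) ∈ subdiff μ g y := by
  obtain ⟨A, hA⟩ := EReal.exists_coe_eq hy (hbot y)
  refine (mem_subdiff_iff hbot hA).2 fun z B hB => ?_
  rw [inner_zero_left, add_zero, ← le_sub_iff_add_le']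
  have hshrink : ∀ t ∈ Ioo (0 : ℝ) 1, (1 - t) * (μ / 2 * ‖z - y‖ ^ 2) ≤ B - A := by
    rintro t ⟨ht₀, ht₁⟩
    obtain ⟨C, hC, hCle⟩ := hconv.exists_coe_eq_le hbot hA hB ht₀.le ht₁.le
    have hAC := hmin ((1 - t) • y + t • z)
    rw [hA, hC, EReal.coe_le_coe_iff] at hAC
    rw [norm_sub_rev] at hCle
    nlinarith
  have hlim : Tendsto (fun t : ℝ => (1 - t) * (μ / 2 * ‖z - y‖ ^ 2)) (𝓝[>] 0)
      (𝓝 (μ / 2 * ‖z - y‖ ^ 2)) := by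
    simpa using ((tendsto_id.const_sub 1).mul_const _ : Tendsto _ (𝓝 (0 : ℝ)) _).mono_left
      nhdsWithin_le_nhds
  exact le_of_tendsto hlim (eventually_of_mem (Ioo_mem_nhdsGT one_pos) hshrink)

lemma norm_sub_div_le_of_mem_subdiff {τ : ℝ} (hbot : ∀ z, f z ≠ ⊥)
    (hτ : 0 < τ) (hadm : 0 < 1 + lam * τ) {x y q : E} (hy : τ⁻¹ • (x - y) ∈ subdiff lam f y)
    (hq : q ∈ subdiff lam f x) : ‖x - y‖ / τ ≤ (1 + lam * τ)⁻¹ * ‖q‖ := by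
  have hmono := mul_sq_norm_sub_le_inner_of_mem_subdiff hbot hq hy
  rw [inner_sub_left, real_inner_smul_left, real_inner_self_eq_norm_sq] at hmono
  have hcs := real_inner_le_norm q (x - y)
  rw [inv_mul_eq_div, div_le_div_iff₀ hτ hadm]
  rcases (norm_nonneg (x - y)).eq_or_lt with hd | hd
  · rw [← hd, zero_mul]; positivity
  · have : (lam + τ⁻¹) * ‖x - y‖ ≤ ‖q‖ := by nlinarith
    have hτinv : τ * τ⁻¹ = 1 := mul_inv_cancel₀ hτ.ne'
    nlinarith

end

namespace LambdaConvex

variable {g : H → EReal} {μ : ℝ}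

theorem exists_forall_le_s9 (hconv : LambdaConvex μ g) (hg : ProperFn g) (hμ : 0 < μ)
    (hlsc : LowerSemicontinuous g) : ∃ y, ∀ z, g y ≤ g z := by
  obtain ⟨L, hL⟩ := hconv.exists_forall_coe_le hg hμ hlsc
  obtain ⟨x₀, hx₀⟩ := hg.1
  obtain ⟨c, hc⟩ := EReal.exists_coe_eq hx₀ (hg.2 x₀)
  set S : Set ℝ := {r | ∃ z, g z = r}
  have hSb : BddBelow S := ⟨L, by rintro _ ⟨z, hz⟩; exact_mod_cast hz ▸ hL z⟩
  obtain ⟨u, hu_anti, hu_lim, hu_mem⟩ := exists_seq_tendsto_sInf (⟨c, x₀, hc⟩ : S.Nonempty) hSb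
  choose y hy using hu_mem
  set m := sInf S
  have hm : ∀ z, (m : EReal) ≤ g z := by
    intro z
    rcases eq_or_ne (g z) ⊤ with hz | hz
    · simp [hz]
    obtain ⟨G, hG⟩ := EReal.exists_coe_eq hz (hg.2 z)
    rw [hG]
    exact_mod_cast csInf_le hSb ⟨z, hG⟩
  have hcauchy : CauchySeq y := by
    refine cauchySeq_of_le_tendsto_0 (fun N => √(16 / μ * (u N - m))) (fun n k N hn hk => ?_) ?_
    · have hmN : m ≤ u N := csInf_le hSb ⟨_, hy N⟩
      rw [Real.le_sqrt dist_nonneg (by have := hμ.le; positivity), dist_eq_norm,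
        div_mul_eq_mul_div, le_div_iff₀ hμ]
      have := hconv.sq_norm_sub_le_s9 hg.2 hm (hy n) (hy k)
      linarith [hu_anti hn, hu_anti hk]
    · simpa using (((hu_lim.sub_const m).const_mul (16 / μ)).sqrt)
  obtain ⟨w, hw⟩ := cauchySeq_tendsto_of_complete hcauchy
  have hgy : Tendsto (g ∘ y) atTop (𝓝 (m : EReal)) := by
    simpa [Function.comp_def, hy] using (continuous_coe_real_ereal.tendsto m).comp hu_lim
  refine ⟨w, fun z => le_trans ?_ (hm z)⟩
  calc g w ≤ liminf g (𝓝 w) := hlsc.le_liminf w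
    _ ≤ liminf (g ∘ y) atTop := hw.liminf_le_liminf_comp
    _ = m := hgy.liminf_eq

end LambdaConvex

section Resolvent

variable {f : H → EReal} {lam τ : ℝ}

lemma exists_forall_add_sq_norm_sub_div_le (hf : ProperFn f)
    (hconv : LambdaConvex lam f) (hlsc : LowerSemicontinuous f) (hτ : 0 < τ)
    (hadm : 0 < 1 + lam * τ) (x : H) :
    ∃ y, ∀ z, f y + ((‖y - x‖ ^ 2 / (2 * τ) : ℝ) : EReal)
      ≤ f z + ((‖z - x‖ ^ 2 / (2 * τ) : ℝ) : EReal) := by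
  refine (hconv.add_sq_norm_sub_div x).exists_forall_le_s9 ⟨?_, fun z => ?_⟩ ?_ ?_
  · obtain ⟨x₀, hx₀⟩ := hf.1
    exact ⟨x₀, EReal.add_ne_top hx₀ (EReal.coe_ne_top _)⟩
  · exact EReal.add_ne_bot_iff.2 ⟨hf.2 z, EReal.coe_ne_bot _⟩
  · rw [show lam + 1 / τ = (1 + lam * τ) / τ by field_simp; ring]
    positivity
  · exact hlsc.add' (continuous_coe_real_ereal.comp (by fun_prop)).lowerSemicontinuous fun z =>
      EReal.continuousAt_add (Or.inr (EReal.coe_ne_bot _)) (Or.inr (EReal.coe_ne_top _))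

lemma Jres_spec (hf : ProperFn f) (hconv : LambdaConvex lam f) (hlsc : LowerSemicontinuous f)
    (hτ : 0 < τ) (hadm : 0 < 1 + lam * τ) (x z : H) :
    f (Jres f τ x) + ((‖Jres f τ x - x‖ ^ 2 / (2 * τ) : ℝ) : EReal)
      ≤ f z + ((‖z - x‖ ^ 2 / (2 * τ) : ℝ) : EReal) := by
  have hex := exists_forall_add_sq_norm_sub_div_le hf hconv hlsc hτ hadm x
  rw [Jres, dif_pos hex]
  exact hex.choose_spec z

lemma mem_subdiff_Jres (hf : ProperFn f) (hconv : LambdaConvex lam f)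
    (hlsc : LowerSemicontinuous f) (hτ : 0 < τ) (hadm : 0 < 1 + lam * τ) (x : H) :
    τ⁻¹ • (x - Jres f τ x) ∈ subdiff lam f (Jres f τ x) := by
  set J := Jres f τ x
  set g : H → EReal := fun z => f z + ((‖z - x‖ ^ 2 / (2 * τ) : ℝ) : EReal)
  have hmin : ∀ z, g J ≤ g z := Jres_spec hf hconv hlsc hτ hadm x
  have hgbot : ∀ z, g z ≠ ⊥ := fun z => EReal.add_ne_bot_iff.2 ⟨hf.2 z, EReal.coe_ne_bot _⟩
  obtain ⟨x₀, hx₀⟩ := hf.1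
  have hgJ : g J ≠ ⊤ := ne_top_of_le_ne_top (EReal.add_ne_top hx₀ (EReal.coe_ne_top _)) (hmin x₀)
  have hfJ : f J ≠ ⊤ := fun h => hgJ (by simp only [g, h, EReal.top_add_coe])
  obtain ⟨A, hA⟩ := EReal.exists_coe_eq hfJ (hf.2 J)
  have hgA : g J = ((A + ‖J - x‖ ^ 2 / (2 * τ) : ℝ) : EReal) := by
    simp only [g, hA, EReal.coe_add]
  have h0 := (hconv.add_sq_norm_sub_div x).zero_mem_subdiff_of_forall_le hgbot hgJ hmin
  refine (mem_subdiff_iff hf.2 hA).2 fun y B hB => ?_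
  have hy := (mem_subdiff_iff hgbot hgA).1 h0 y (B + ‖y - x‖ ^ 2 / (2 * τ))
    (by simp only [g, hB, EReal.coe_add])
  have hexp : ‖y - x‖ ^ 2 / (2 * τ)
      = ‖y - J‖ ^ 2 / (2 * τ) - τ⁻¹ * ⟪x - J, y - J⟫ + ‖J - x‖ ^ 2 / (2 * τ) := by
    rw [show y - x = (y - J) + (J - x) by abel, norm_add_sq_real,
      show J - x = -(x - J) by abel, inner_neg_right, norm_neg, real_inner_comm]
    field_simp
    ring
  have hsplit : (lam + 1 / τ) / 2 * ‖y - J‖ ^ 2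
      = lam / 2 * ‖y - J‖ ^ 2 + ‖y - J‖ ^ 2 / (2 * τ) := by ring
  rw [inner_zero_left, add_zero] at hy
  rw [real_inner_smul_left]
  linarith

end Resolvent

section Slope

variable {f : H → EReal} {lam : ℝ} {x : H}

lemma exists_mem_subdiff_forall_norm_le (hbot : ∀ z, f z ≠ ⊥)
    (hne : (subdiff lam f x).Nonempty) :
    ∃ p ∈ subdiff lam f x, ∀ q ∈ subdiff lam f x, ‖p‖ ≤ ‖q‖ := by
  obtain ⟨p, hp, hpmin⟩ := exists_norm_eq_iInf_of_complete_convex hne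
    (isClosed_subdiff hbot).isComplete (convex_subdiff hbot) 0
  refine ⟨p, hp, fun q hq => ?_⟩
  have hbdd : BddBelow (range fun w : subdiff lam f x => ‖(0 : H) - w‖) :=
    ⟨0, forall_mem_range.2 fun _ => norm_nonneg _⟩
  have hle := ciInf_le hbdd ⟨q, hq⟩
  simp only [zero_sub, norm_neg] at hpmin hle
  rwa [← hpmin] at hle

lemma gradNorm_le_of_mem_subdiff (hbot : ∀ z, f z ≠ ⊥) {p : H} (hp : p ∈ subdiff lam f x) :
    gradNorm lam f x ≤ ENNReal.ofReal ‖p‖ := by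
  have hex := exists_mem_subdiff_forall_norm_le hbot ⟨p, hp⟩
  rw [gradNorm, if_pos ⟨p, hp⟩, gradMin, dif_pos hex]
  exact ENNReal.ofReal_le_ofReal (hex.choose_spec.2 p hp)

lemma ofReal_le_mul_gradNorm (hbot : ∀ z, f z ≠ ⊥) {a c : ℝ} (hc : 0 < c)
    (h : ∀ q ∈ subdiff lam f x, a ≤ c * ‖q‖) :
    ENNReal.ofReal a ≤ ENNReal.ofReal c * gradNorm lam f x := by
  by_cases hne : (subdiff lam f x).Nonempty
  · have hex := exists_mem_subdiff_forall_norm_le hbot hne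
    rw [gradNorm, if_pos hne, gradMin, dif_pos hex, ← ENNReal.ofReal_mul hc.le]
    exact ENNReal.ofReal_le_ofReal (h _ hex.choose_spec.1)
  · rw [gradNorm, if_neg hne, ENNReal.mul_top (by simpa using hc)]
    exact le_top

end Slope

/-- monotonicity properties of the slopes along the resolvent. -/
theorem statement9 (lam : ℝ) (f : H → EReal)
    (hf : ProperFn f) (hconv : LambdaConvex lam f) (hlsc : LowerSemicontinuous f)
    (τ : ℝ) (hτ : 0 < τ) (hadm : lam < 0 → τ < -1 / lam) (x : H) :
    gradNorm lam f (Jres f τ x) ≤ ENNReal.ofReal (‖x - Jres f τ x‖ / τ) ∧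
    ENNReal.ofReal (‖x - Jres f τ x‖ / τ)
      ≤ ENNReal.ofReal ((1 + lam * τ)⁻¹) * gradNorm lam f x := by
  have hadm' : 0 < 1 + lam * τ := by
    rcases lt_or_ge lam 0 with hlam | hlam
    · have := hadm hlam
      rw [lt_div_iff_of_neg hlam] at this
      linarith
    · positivity
  have hp := mem_subdiff_Jres hf hconv hlsc hτ hadm' x
  refine ⟨(gradNorm_le_of_mem_subdiff hf.2 hp).trans_eq ?_,
    ofReal_le_mul_gradNorm hf.2 (inv_pos.2 hadm') fun q hq =>
      norm_sub_div_le_of_mem_subdiff hf.2 hτ hadm' hp hq⟩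
  rw [norm_smul, Real.norm_of_nonneg (inv_nonneg.2 hτ.le), inv_mul_eq_div]

end
end
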